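/- Let F be a finite metric space with at least two points and no focal points. Then: (a) for every 2-covering 𝒰 of F with Δ(𝒰) < Δ(F) there is a unique s ∈ (0,∞) such that H^s_𝒰(F) = Δ(F)^s; and (b) there is a unique s₀ ∈ (0,∞) such that H^{s₀}(F) = Δ(F)^{s₀}. -/

import Mathlib

open Metric

namespace FinDim

variable {X : Type*} [MetricSpace X]

/-- `ν_F(a)`: the distance from `a` to a nearest other point of `F`. -/
noncomputable def nu (F : Finset X) (a : X) : ℝ :=
  sInf {r : ℝ | ∃ x ∈ F, x ≠ a ∧ r = dist a x}

/-- `δ(F)`: the separation of `F`, the minimum distance between distinct points. -/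
noncomputable def sep (F : Finset X) : ℝ :=
  sInf {r : ℝ | ∃ x ∈ F, ∃ y ∈ F, x ≠ y ∧ r = dist x y}

/-- A 2-covering of `F`: a family of subsets of `F` covering `F`,
each member having at least two elements. -/
def IsTwoCover (F : Finset X) (U : Finset (Finset X)) : Prop :=
  (∀ V ∈ U, V ⊆ F) ∧ (∀ V ∈ U, 2 ≤ V.card) ∧ ∀ a ∈ F, ∃ V ∈ U, a ∈ V

/-- `Δ(𝒰)`: maximum diameter of the members of the family `𝒰`. -/
noncomputable def coverDiam (U : Finset (Finset X)) : ℝ :=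
  sSup {r : ℝ | ∃ V ∈ U, r = Metric.diam (V : Set X)}

/-- `∇(F)`: the covering diameter of `F`. -/
noncomputable def nablaF (F : Finset X) : ℝ :=
  sInf {r : ℝ | ∃ U : Finset (Finset X), IsTwoCover F U ∧ r = coverDiam U}

/-- `a` is a focal point of `F`. -/
def IsFocal (F : Finset X) (a : X) : Prop :=
  a ∈ F ∧ ∀ x ∈ F, x ≠ a → dist a x = Metric.diam (F : Set X)

/-- `H^s_𝒰(F) = Σ_{U ∈ 𝒰} Δ(U)^s`. -/
noncomputable def Hcov (U : Finset (Finset X)) (s : ℝ) : ℝ :=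
  ∑ V ∈ U, Metric.diam (V : Set X) ^ s

/-- `H^s(F)`: minimum of `H^s_𝒰(F)` over 2-coverings `𝒰` with `Δ(𝒰) = ∇(F)`. -/
noncomputable def HH (F : Finset X) (s : ℝ) : ℝ :=
  sInf {h : ℝ | ∃ U : Finset (Finset X),
    IsTwoCover F U ∧ coverDiam U = nablaF F ∧ h = Hcov U s}

/-- The finite Hausdorff dimension: the unique `s₀ ∈ (0,∞)` with
`H^{s₀}(F) = Δ(F)^{s₀}` (when `F` has no focal points). -/
noncomputable def dimfH (F : Finset X) : ℝ :=
  sInf {s : ℝ | 0 < s ∧ HH F s = Metric.diam (F : Set X) ^ s}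

/-- `T_{∇(F)}(F)`: the minimal cardinality of a 2-covering `𝒰` with `Δ(𝒰) = ∇(F)`. -/
noncomputable def Tmin (F : Finset X) : ℕ :=
  sInf {n : ℕ | ∃ U : Finset (Finset X),
    IsTwoCover F U ∧ coverDiam U = nablaF F ∧ U.card = n}

/-- The finite box dimension `dim_fB(F) = ln T_{∇(F)}(F) / ln (Δ(F)/∇(F))`. -/
noncomputable def dimfB (F : Finset X) : ℝ :=
  Real.log (Tmin F) / Real.log (Metric.diam (F : Set X) / nablaF F)

/-- `ν_A(x)` for a subset `A` of a metric space. -/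
noncomputable def nuSet {Z : Type*} [MetricSpace Z] (A : Set Z) (x : Z) : ℝ :=
  sInf {r : ℝ | ∃ y ∈ A, y ≠ x ∧ r = dist x y}

/-- `∇(A) = sup {ν_A(x) : x ∈ A}` for a subset `A` of a metric space. -/
noncomputable def nablaSet {Z : Type*} [MetricSpace Z] (A : Set Z) : ℝ :=
  sSup {r : ℝ | ∃ x ∈ A, r = nuSet A x}

end FinDim


/-!
Dividing by `Δ(F)^s`, the function `s ↦ H^s_𝒰(F) / Δ(F)^s = ∑_{U ∈ 𝒰} (Δ(U)/Δ(F))^s` is a sum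
of at least two exponentials with bases in `(0,1)` when `Δ(𝒰) < Δ(F)`: it is strictly decreasing
and continuous, equals `|𝒰| ≥ 2` at `s = 0` and tends to `0`, so it takes the value `1` exactly
once. `H^s(F) / Δ(F)^s` is the pointwise minimum of finitely many such functions, hence still
strictly decreasing, and it equals `1` at the smallest of their roots. Without focal points every
point has a partner at distance `< Δ(F)`, and these pairs form a 2-covering; so
`∇(F) < Δ(F)` and the optimal coverings fall under the first case.
-/

open Filter Set

section PointwiseMin

variable {ι α β : Type*} {C : Set ι} {f : ι → α → β} {m : α → β}

theorem strictAnti_of_isPointwiseMin [Preorder α] [Preorder β]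
    (hf : ∀ i ∈ C, StrictAnti (f i)) (hle : ∀ i ∈ C, ∀ s, m s ≤ f i s)
    (hmin : ∀ s, ∃ i ∈ C, m s = f i s) : StrictAnti m := by
  intro s t hst
  obtain ⟨i, hi, hmi⟩ := hmin s
  calc m t ≤ f i t := hle i hi t
    _ < f i s := hf i hi hst
    _ = m s := hmi.symm

/-- The smallest of the roots of the `f i` is a root of their pointwise minimum. -/
theorem exists_eq_of_isPointwiseMin [LinearOrder α] [PartialOrder β] {S : Set α} {c : β}
    (hC : C.Finite) (hne : C.Nonempty) (hf : ∀ i ∈ C, Antitone (f i))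
    (hle : ∀ i ∈ C, ∀ s, m s ≤ f i s) (hmin : ∀ s, ∃ i ∈ C, m s = f i s)
    (hroot : ∀ i ∈ C, ∃ s ∈ S, f i s = c) : ∃ s ∈ S, m s = c := by
  have : Nonempty α := by
    obtain ⟨i, hi⟩ := hne
    obtain ⟨s, -⟩ := hroot i hi
    exact ⟨s⟩
  choose! σ hσS hσ using hroot
  obtain ⟨j, hj, hσj⟩ := Set.exists_min_image C σ hC hne
  refine ⟨σ j, hσS j hj, le_antisymm ((hle j hj _).trans_eq (hσ j hj)) ?_⟩
  obtain ⟨i, hi, hmi⟩ := hmin (σ j)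
  rw [hmi, ← hσ i hi]
  exact hf i hi (hσj i hi)

end PointwiseMin

section SumRpow

variable {ι : Type*} {T : Finset ι} {r : ι → ℝ}

theorem strictAnti_sum_rpow (hT : T.Nonempty) (h0 : ∀ i ∈ T, 0 < r i) (h1 : ∀ i ∈ T, r i < 1) :
    StrictAnti fun s : ℝ => ∑ i ∈ T, r i ^ s := fun _ _ hst =>
  Finset.sum_lt_sum_of_nonempty hT fun i hi =>
    Real.rpow_lt_rpow_of_exponent_gt (h0 i hi) (h1 i hi) hst

theorem exists_sum_rpow_eq_one (hT : 2 ≤ T.card) (h0 : ∀ i ∈ T, 0 < r i)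
    (h1 : ∀ i ∈ T, r i < 1) : ∃ s : ℝ, 0 < s ∧ ∑ i ∈ T, r i ^ s = 1 := by
  set φ : ℝ → ℝ := fun s => ∑ i ∈ T, r i ^ s
  have hφ_cont : Continuous φ :=
    continuous_finsetSum T fun i hi => Real.continuous_const_rpow (h0 i hi).ne'
  have hφ_zero : φ 0 = T.card := by simp [φ]
  have hφ_lim : Tendsto φ atTop (nhds 0) := by
    simpa using tendsto_finsetSum T fun i (hi : i ∈ T) =>
      tendsto_rpow_atTop_of_base_lt_one (r i) (by linarith [h0 i hi]) (h1 i hi)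
  have hcard : (2 : ℝ) ≤ T.card := by exact_mod_cast hT
  obtain ⟨b, hb, hb0⟩ :=
    ((hφ_lim.eventually_lt_const one_pos).and (eventually_gt_atTop 0)).exists
  obtain ⟨s, hs, hφs⟩ : ∃ s ∈ Icc 0 b, φ s = 1 :=
    intermediate_value_Icc' hb0.le hφ_cont.continuousOn ⟨hb.le, by linarith⟩
  refine ⟨s, hs.1.lt_of_ne ?_, hφs⟩
  rintro rfl
  linarith

end SumRpow

theorem existsUnique_eq_rpow_of_strictAnti {g : ℝ → ℝ} {Δ : ℝ} (hΔ : 0 < Δ)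
    (hanti : StrictAnti fun s => g s / Δ ^ s) (hroot : ∃ s, 0 < s ∧ g s / Δ ^ s = 1) :
    ∃! s, 0 < s ∧ g s = Δ ^ s := by
  have hiff : ∀ s, g s = Δ ^ s ↔ g s / Δ ^ s = 1 := fun s =>
    (div_eq_one_iff_eq (Real.rpow_pos_of_pos hΔ s).ne').symm
  obtain ⟨s, hs, hgs⟩ := hroot
  exact ⟨s, ⟨hs, (hiff s).2 hgs⟩, fun t ⟨_, hgt⟩ => hanti.injective (((hiff t).1 hgt).trans hgs.symm)⟩

namespace FinDim

theorem setOf_isTwoCover_finite {X : Type*} (F : Finset X) :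
    {U : Finset (Finset X) | IsTwoCover F U}.Finite :=
  F.powerset.powerset.finite_toSet.subset fun _ hU =>
    Finset.mem_powerset.2 fun V hV => Finset.mem_powerset.2 (hU.1 V hV)

variable {X : Type*} [MetricSpace X]

theorem diam_pos_of_two_le_card {V : Finset X} (hV : 2 ≤ V.card) : 0 < diam (V : Set X) :=
  diam_pos (Finset.one_lt_card_iff_nontrivial.mp hV) V.finite_toSet.isBounded

theorem coverDiam_eq_sSup_image (U : Finset (Finset X)) :
    coverDiam U = sSup ((fun V : Finset X => diam (V : Set X)) '' U) := by
  simp only [coverDiam, Set.image, Finset.mem_coe, eq_comm]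

theorem le_coverDiam {U : Finset (Finset X)} {V : Finset X} (hV : V ∈ U) :
    diam (V : Set X) ≤ coverDiam U := by
  rw [coverDiam_eq_sSup_image]
  exact le_csSup (U.finite_toSet.image _).bddAbove (mem_image_of_mem _ hV)

theorem coverDiam_nonneg (U : Finset (Finset X)) : 0 ≤ coverDiam U :=
  Real.sSup_nonneg fun _ ⟨_, _, hr⟩ => hr ▸ diam_nonneg

theorem coverDiam_lt_iff {U : Finset (Finset X)} (hU : U.Nonempty) {Δ : ℝ} :
    coverDiam U < Δ ↔ ∀ V ∈ U, diam (V : Set X) < Δ := by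
  rw [coverDiam_eq_sSup_image, Set.Finite.csSup_lt_iff (U.finite_toSet.image _)
    ((Finset.coe_nonempty.2 hU).image _), Set.forall_mem_image]
  rfl

theorem Hcov_div_rpow (U : Finset (Finset X)) {Δ : ℝ} (hΔ : 0 ≤ Δ) (s : ℝ) :
    Hcov U s / Δ ^ s = ∑ V ∈ U, (diam (V : Set X) / Δ) ^ s := by
  simp only [Hcov, Finset.sum_div, Real.div_rpow diam_nonneg hΔ]

theorem strictAnti_Hcov_div_rpow {U : Finset (Finset X)} {Δ : ℝ} (hU : U.Nonempty)
    (h2 : ∀ V ∈ U, 2 ≤ V.card) (hd : coverDiam U < Δ) :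
    StrictAnti fun s => Hcov U s / Δ ^ s := by
  have hΔ : 0 < Δ := (coverDiam_nonneg U).trans_lt hd
  simp only [Hcov_div_rpow U hΔ.le]
  exact strictAnti_sum_rpow hU (fun V hV => div_pos (diam_pos_of_two_le_card (h2 V hV)) hΔ)
    fun V hV => (div_lt_one hΔ).2 ((le_coverDiam hV).trans_lt hd)

theorem exists_Hcov_div_rpow_eq_one {U : Finset (Finset X)} {Δ : ℝ} (hU : 2 ≤ U.card)
    (h2 : ∀ V ∈ U, 2 ≤ V.card) (hd : coverDiam U < Δ) :
    ∃ s : ℝ, 0 < s ∧ Hcov U s / Δ ^ s = 1 := by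
  have hΔ : 0 < Δ := (coverDiam_nonneg U).trans_lt hd
  simp only [Hcov_div_rpow U hΔ.le]
  exact exists_sum_rpow_eq_one hU (fun V hV => div_pos (diam_pos_of_two_le_card (h2 V hV)) hΔ)
    fun V hV => (div_lt_one hΔ).2 ((le_coverDiam hV).trans_lt hd)

theorem IsTwoCover.two_le_card {F : Finset X} {U : Finset (Finset X)} (hU : IsTwoCover F U)
    (hF : F.Nonempty) (hd : coverDiam U < diam (F : Set X)) : 2 ≤ U.card := by
  by_contra! hlt
  obtain ⟨a, ha⟩ := hF
  obtain ⟨V, hV, -⟩ := hU.2.2 a ha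
  have hFV : F ⊆ V := fun b hb => by
    obtain ⟨V', hV', hbV'⟩ := hU.2.2 b hb
    rwa [Finset.card_le_one.mp (by omega) V' hV' V hV] at hbV'
  have := diam_mono (Finset.coe_subset.2 hFV) V.finite_toSet.isBounded
  linarith [le_coverDiam hV]

theorem existsUnique_Hcov_eq_rpow_diam {F : Finset X} {U : Finset (Finset X)} (hF : 2 ≤ F.card)
    (hU : IsTwoCover F U) (hd : coverDiam U < diam (F : Set X)) :
    ∃! s : ℝ, 0 < s ∧ Hcov U s = diam (F : Set X) ^ s := by
  have hFne : F.Nonempty := Finset.card_pos.mp (by omega)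
  have hUcard := hU.two_le_card hFne hd
  exact existsUnique_eq_rpow_of_strictAnti (diam_pos_of_two_le_card hF)
    (strictAnti_Hcov_div_rpow (Finset.card_pos.mp (by omega)) hU.2.1 hd)
    (exists_Hcov_div_rpow_eq_one hUcard hU.2.1 hd)

theorem nablaF_eq_sInf_image (F : Finset X) :
    nablaF F = sInf (coverDiam '' {U : Finset (Finset X) | IsTwoCover F U}) := by
  rw [nablaF]
  congr 1
  ext r
  simp only [mem_ofPred_eq, mem_image, eq_comm]

theorem nablaF_le_coverDiam {F : Finset X} {U : Finset (Finset X)} (hU : IsTwoCover F U) :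
    nablaF F ≤ coverDiam U := by
  rw [nablaF_eq_sInf_image]
  exact csInf_le ((setOf_isTwoCover_finite F).image _).bddBelow (mem_image_of_mem _ hU)

def optimalTwoCovers (F : Finset X) : Set (Finset (Finset X)) :=
  {U | IsTwoCover F U ∧ coverDiam U = nablaF F}

theorem optimalTwoCovers_finite (F : Finset X) : (optimalTwoCovers F).Finite :=
  (setOf_isTwoCover_finite F).subset fun _ hU => hU.1

theorem optimalTwoCovers_nonempty {F : Finset X} {U : Finset (Finset X)} (hU : IsTwoCover F U) :
    (optimalTwoCovers F).Nonempty := by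
  have hmin := Set.Nonempty.csInf_mem ⟨_, mem_image_of_mem coverDiam hU⟩
    ((setOf_isTwoCover_finite F).image coverDiam)
  rw [← nablaF_eq_sInf_image] at hmin
  obtain ⟨W, hW, hWeq⟩ := hmin
  exact ⟨W, hW, hWeq⟩

theorem HH_eq_sInf_image (F : Finset X) (s : ℝ) :
    HH F s = sInf ((Hcov · s) '' optimalTwoCovers F) := by
  rw [HH]
  congr 1
  ext r
  simp only [optimalTwoCovers, mem_ofPred_eq, mem_image, eq_comm, and_assoc]

theorem HH_le_Hcov {F : Finset X} {U : Finset (Finset X)} (hU : U ∈ optimalTwoCovers F) (s : ℝ) :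
    HH F s ≤ Hcov U s := by
  rw [HH_eq_sInf_image]
  exact csInf_le ((optimalTwoCovers_finite F).image _).bddBelow (mem_image_of_mem _ hU)

theorem exists_HH_eq_Hcov {F : Finset X} (hF : (optimalTwoCovers F).Nonempty) (s : ℝ) :
    ∃ U ∈ optimalTwoCovers F, HH F s = Hcov U s := by
  rw [HH_eq_sInf_image]
  obtain ⟨U, hU, hUeq⟩ := (hF.image _).csInf_mem ((optimalTwoCovers_finite F).image (Hcov · s))
  exact ⟨U, hU, hUeq.symm⟩

theorem exists_isTwoCover_coverDiam_lt {F : Finset X} (hF : F.Nonempty)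
    (hfoc : ∀ a, ¬ IsFocal F a) :
    ∃ W : Finset (Finset X), IsTwoCover F W ∧ coverDiam W < diam (F : Set X) := by
  classical
  have hpartner : ∀ a ∈ F, ∃ b ∈ F, b ≠ a ∧ dist a b < diam (F : Set X) := by
    intro a ha
    obtain ⟨b, hb, hba, hne⟩ : ∃ b ∈ F, b ≠ a ∧ dist a b ≠ diam (F : Set X) := by
      simpa [IsFocal, ha] using hfoc a
    exact ⟨b, hb, hba, (dist_le_diam_of_mem F.finite_toSet.isBounded ha hb).lt_of_ne hne⟩
  choose! p hpF hpne hpd using hpartner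
  refine ⟨F.image fun a => {a, p a}, ⟨?_, ?_, ?_⟩, ?_⟩
  · simp only [Finset.forall_mem_image]
    exact fun a ha => Finset.insert_subset ha (Finset.singleton_subset_iff.2 (hpF a ha))
  · simp only [Finset.forall_mem_image]
    exact fun a ha => (Finset.card_pair (hpne a ha).symm).ge
  · exact fun a ha => ⟨_, Finset.mem_image_of_mem _ ha, Finset.mem_insert_self _ _⟩
  · rw [coverDiam_lt_iff (hF.image _), Finset.forall_mem_image]
    intro a ha
    rw [Finset.coe_pair, diam_pair]
    exact hpd a ha

theorem existsUnique_HH_eq_rpow_diam {F : Finset X} (hF : 2 ≤ F.card)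
    (hfoc : ∀ a, ¬ IsFocal F a) :
    ∃! s : ℝ, 0 < s ∧ HH F s = diam (F : Set X) ^ s := by
  set Δ := diam (F : Set X)
  have hΔ : 0 < Δ := diam_pos_of_two_le_card hF
  have hFne : F.Nonempty := Finset.card_pos.mp (by omega)
  obtain ⟨W, hW, hWd⟩ := exists_isTwoCover_coverDiam_lt hFne hfoc
  have hCne : (optimalTwoCovers F).Nonempty := optimalTwoCovers_nonempty hW
  have hsmall : ∀ U ∈ optimalTwoCovers F, coverDiam U < Δ := fun U hU =>
    hU.2 ▸ (nablaF_le_coverDiam hW).trans_lt hWd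
  have hcard : ∀ U ∈ optimalTwoCovers F, 2 ≤ U.card := fun U hU =>
    hU.1.two_le_card hFne (hsmall U hU)
  have hanti : ∀ U ∈ optimalTwoCovers F, StrictAnti fun s => Hcov U s / Δ ^ s := fun U hU =>
    strictAnti_Hcov_div_rpow (Finset.card_pos.mp (by have := hcard U hU; omega)) hU.1.2.1 (hsmall U hU)
  have hle : ∀ U ∈ optimalTwoCovers F, ∀ s, HH F s / Δ ^ s ≤ Hcov U s / Δ ^ s := fun U hU s =>
    div_le_div_of_nonneg_right (HH_le_Hcov hU s) (Real.rpow_nonneg hΔ.le s)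
  have hmin : ∀ s, ∃ U ∈ optimalTwoCovers F, HH F s / Δ ^ s = Hcov U s / Δ ^ s := fun s =>
    (exists_HH_eq_Hcov hCne s).imp fun U ⟨hU, hUeq⟩ => ⟨hU, by rw [hUeq]⟩
  exact existsUnique_eq_rpow_of_strictAnti hΔ (strictAnti_of_isPointwiseMin hanti hle hmin)
    (exists_eq_of_isPointwiseMin (S := Ioi 0) (optimalTwoCovers_finite F) hCne
      (fun U hU => (hanti U hU).antitone) hle hmin fun U hU =>
        exists_Hcov_div_rpow_eq_one (hcard U hU) hU.1.2.1 (hsmall U hU))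

end FinDim

open FinDim in
/-- Existence and uniqueness of the solution of `H^s_𝒰(F) = Δ(F)^s` and of
`H^s(F) = Δ(F)^s`, for `F` without focal points. -/
theorem stmt3 {X : Type*} [MetricSpace X] (F : Finset X) (hF : 2 ≤ F.card)
    (hfoc : ∀ a, ¬ IsFocal F a) :
    (∀ U : Finset (Finset X), IsTwoCover F U → coverDiam U < Metric.diam (F : Set X) →
      ∃! s : ℝ, 0 < s ∧ Hcov U s = Metric.diam (F : Set X) ^ s) ∧
    (∃! s : ℝ, 0 < s ∧ HH F s = Metric.diam (F : Set X) ^ s) :=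
  ⟨fun _ hU hd => existsUnique_Hcov_eq_rpow_diam hF hU hd, existsUnique_HH_eq_rpow_diam hF hfoc⟩
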